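/- arXiv:2105.04766 — 2 statements merged into one kernel-verified Lean document; each statement's English description precedes it below -/
import Mathlib

section
/- Let p be a polynomial in n real variables that can be written as the sum of a univariate polynomial in one of the variables and a quadratic polynomial in all variables. Then p is nonnegative (p(x) ≥ 0 for all x ∈ ℝⁿ) if and only if p is a sum of squares of polynomials. -/
/-!
Induction on the number of variables. Viewed as a polynomial in a variable `x₀` other than the
distinguished one, `p = a x₀² + b x₀ + c` with `a` constant, `b` affine and `c` again of the form
univariate plus quadratic in the remaining variables. Nonnegativity forces `a ≥ 0`, and `b = 0`
if `a = 0`, so completing the square gives `p = a (x₀ + b / 2a)² + (c - b² / 4a)`, where the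
remainder is nonnegative (evaluate `p` where the square vanishes) and of the same shape in one
variable fewer. In one variable, a nonnegative polynomial is a nonnegative constant times a
product of factors `(X - Re z)² + (Im z)²`, one for each complex root `z` up to conjugation,
since real roots have even multiplicity.
-/

open MvPolynomial

/-- A polynomial is a sum of squares. -/
def IsSOS {σ : Type*} (p : MvPolynomial σ ℝ) : Prop :=
  ∃ (m : ℕ) (q : Fin m → MvPolynomial σ ℝ), p = ∑ j, q j ^ 2

theorem IsSumSq.map {R S F : Type*} [Semiring R] [Semiring S] [FunLike F R S]
    [RingHomClass F R S] (f : F) {s : R} (hs : IsSumSq s) : IsSumSq (f s) := by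
  induction hs with
  | zero => simp
  | sq_add a _ ih => simpa using ih.sq_add (f a)

theorem isSOS_iff_isSumSq {σ : Type*} {p : MvPolynomial σ ℝ} : IsSOS p ↔ IsSumSq p := by
  refine ⟨fun ⟨m, q, hp⟩ => hp ▸ IsSumSq.sum_sq _ q, fun hp => ?_⟩
  induction hp with
  | zero => exact ⟨0, Fin.elim0, by simp⟩
  | sq_add a _ ih =>
    obtain ⟨m, q, rfl⟩ := ih
    exact ⟨m + 1, Fin.cons a q, by simp [Fin.sum_univ_succ, sq]⟩

theorem nonneg_of_forall_quadratic_nonneg {a b c : ℝ} (h : ∀ s, 0 ≤ a * s ^ 2 + b * s + c) :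
    0 ≤ a := by
  have hdisc : discrim a b c ≤ 0 := discrim_le_zero fun s => by simpa [sq] using h s
  rw [discrim] at hdisc
  by_contra! ha
  nlinarith [h 1, h (-1)]

theorem eq_zero_of_forall_linear_nonneg {b c : ℝ} (h : ∀ s, 0 ≤ b * s + c) : b = 0 := by
  by_contra hb
  have := h (-(|c| + 1) / b)
  rw [mul_div_cancel₀ _ hb] at this
  linarith [le_abs_self c]

-- With `a = 0` (hence `b = 0`) both sides are `c`, as `(2 * 0)⁻¹ = (4 * 0)⁻¹ = 0`.
theorem algebraMap_mul_sq_add_mul_add_eq {K A : Type*} [Field K] [NeZero (2 : K)] [CommRing A]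
    [Algebra K A] {a : K} {b : A} (hb : a = 0 → b = 0) (t c : A) :
    algebraMap K A a * t ^ 2 + b * t + c =
      algebraMap K A a * (t + algebraMap K A (2 * a)⁻¹ * b) ^ 2 +
        (c - algebraMap K A (4 * a)⁻¹ * b ^ 2) := by
  rcases eq_or_ne a 0 with rfl | ha
  · simp [hb rfl]
  have h1 : algebraMap K A a * algebraMap K A (2 * a)⁻¹ * 2 = 1 := by
    rw [← map_mul, ← map_ofNat (algebraMap K A), ← map_mul, ← map_one (algebraMap K A)]
    congr 1; field_simp
  have h2 : algebraMap K A a * algebraMap K A (2 * a)⁻¹ ^ 2 = algebraMap K A (4 * a)⁻¹ := by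
    rw [← map_pow, ← map_mul, show (4 : K) = 2 ^ 2 by norm_num]
    congr 1; field_simp
  linear_combination (-(b * t)) * h1 - b ^ 2 * h2

namespace Polynomial

theorem sq_dvd_of_isRoot_of_nonneg {u : ℝ[X]} (hu : ∀ x, 0 ≤ u.eval x) {r : ℝ}
    (hr : u.IsRoot r) : (X - C r) ^ 2 ∣ u := by
  rcases eq_or_ne u 0 with rfl | hu0
  · exact dvd_zero _
  have hmin : IsLocalMin (fun x => u.eval x) r :=
    Filter.Eventually.of_forall fun x => by simpa [hr.eq_zero] using hu x
  rw [← le_rootMultiplicity_iff hu0, Nat.succ_le_iff, one_lt_rootMultiplicity_iff_isRoot hu0]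
  exact ⟨hr, by simpa [Polynomial.deriv] using hmin.deriv_eq_zero⟩

theorem exists_isSumSq_dvd_of_nonneg {u : ℝ[X]} (hu : ∀ x, 0 ≤ u.eval x)
    (hdeg : 0 < u.natDegree) : ∃ f : ℝ[X], 0 < f.natDegree ∧ IsSumSq f ∧ f ∣ u := by
  obtain ⟨z, hz⟩ :=
    IsAlgClosed.exists_aeval_eq_zero ℂ u (natDegree_pos_iff_degree_pos.mp hdeg).ne'
  refine ⟨(X - C z.re) ^ 2 + C z.im ^ 2, ?_, ?_, ?_⟩
  · rw [← C_pow, natDegree_add_C, natDegree_pow, natDegree_X_sub_C]; norm_num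
  · simpa only [sq] using (IsSumSq.mul_self _).add (IsSumSq.mul_self _)
  rcases eq_or_ne z.im 0 with him | him
  · have hz' : z = algebraMap ℝ ℂ z.re := Complex.ext (by simp) (by simp [him])
    rw [hz', aeval_algebraMap_apply_eq_algebraMap_eval, Complex.coe_algebraMap,
      Complex.ofReal_eq_zero] at hz
    simpa [him] using sq_dvd_of_isRoot_of_nonneg hu hz
  · convert quadratic_dvd_of_aeval_eq_zero_im_ne_zero u hz him using 1
    rw [← Complex.normSq_eq_norm_sq, Complex.normSq_apply, C_mul, C_add, C_mul, C_mul, C_ofNat]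
    ring

theorem eval_nonneg_of_eval_mul_nonneg {f w : ℝ[X]} (hf0 : f ≠ 0) (hf : ∀ x, 0 ≤ f.eval x)
    (hfw : ∀ x, 0 ≤ (f * w).eval x) (x : ℝ) : 0 ≤ w.eval x := by
  have hdense : Dense {x | f.IsRoot x}ᶜ := (finite_setOfPred_isRoot hf0).countable.dense_compl ℝ
  have hsub : {x | f.IsRoot x}ᶜ ⊆ {x | 0 ≤ w.eval x} := fun y hy =>
    nonneg_of_mul_nonneg_right (by simpa using hfw y) ((hf y).lt_of_ne (Ne.symm hy))
  exact closure_minimal hsub (isClosed_le continuous_const w.continuous)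
    (hdense.closure_eq ▸ trivial)

theorem isSumSq_of_nonneg {u : ℝ[X]} (hu : ∀ x, 0 ≤ u.eval x) : IsSumSq u := by
  induction hd : u.natDegree using Nat.strong_induction_on generalizing u with
  | _ d ih =>
  rcases Nat.eq_zero_or_pos d with rfl | hpos
  · have hc : 0 ≤ u.coeff 0 := by simpa [coeff_zero_eq_eval_zero] using hu 0
    rw [eq_C_of_natDegree_eq_zero hd, ← Real.mul_self_sqrt hc, C_mul]
    exact IsSumSq.mul_self _
  obtain ⟨f, hf, hfsq, w, rfl⟩ := exists_isSumSq_dvd_of_nonneg hu (hd ▸ hpos)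
  have hf0 : f ≠ 0 := ne_zero_of_natDegree_gt hf
  have hw0 : w ≠ 0 := by rintro rfl; rw [mul_zero, natDegree_zero] at hd; omega
  have hwdeg : w.natDegree < d := by rw [← hd, natDegree_mul hf0 hw0]; omega
  exact hfsq.mul <| ih _ hwdeg (eval_nonneg_of_eval_mul_nonneg hf0
    (fun x => (hfsq.map (evalRingHom x)).nonneg) hu) rfl

end Polynomial

namespace MvPolynomial

theorem isSumSq_of_nonneg_of_unique {σ : Type*} [Unique σ] {p : MvPolynomial σ ℝ}
    (hp : ∀ x, 0 ≤ eval x p) : IsSumSq p := by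
  obtain ⟨v, rfl⟩ := (uniqueAlgEquiv ℝ σ).symm.surjective p
  refine (Polynomial.isSumSq_of_nonneg fun t => ?_).map (uniqueAlgEquiv ℝ σ).symm
  have hC : (eval fun _ : σ => t).comp C = RingHom.id ℝ := RingHom.ext fun _ => eval_C _
  simpa [Polynomial.hom_eval₂, hC] using hp fun _ => t

theorem finSuccEquiv_rename_succ {R : Type*} [CommSemiring R] {n : ℕ}
    (w : MvPolynomial (Fin n) R) : finSuccEquiv R n (rename Fin.succ w) = Polynomial.C w := by
  induction w using MvPolynomial.induction_on with
  | C a => simp [finSuccEquiv_apply]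
  | add p q hp hq => simp [hp, hq]
  | mul_X p k hp => simp [hp, finSuccEquiv_X_succ]

theorem exists_eq_quadratic_in_X_zero {R : Type*} [CommSemiring R] {n : ℕ}
    {q : MvPolynomial (Fin (n + 1)) R} (hq : q.totalDegree ≤ 2) :
    ∃ (a : R) (b c : MvPolynomial (Fin n) R), b.totalDegree ≤ 1 ∧ c.totalDegree ≤ 2 ∧
      q = C a * X 0 ^ 2 + rename Fin.succ b * X 0 + rename Fin.succ c := by
  obtain ⟨Q, hQq⟩ : ∃ Q, finSuccEquiv R n q = Q := ⟨_, rfl⟩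
  have hQ (k : ℕ) (hk : Q.coeff k ≠ 0) : (Q.coeff k).totalDegree + k ≤ 2 := by
    subst hQq; exact (totalDegree_coeff_finSuccEquiv_add_le q k hk).trans hq
  have hcoeff (k : ℕ) : (Q.coeff k).totalDegree ≤ 2 - k := by
    by_cases h : Q.coeff k = 0
    · simp [h]
    · have := hQ k h; omega
  have hQ2 : Q.natDegree ≤ 2 := Polynomial.natDegree_le_iff_coeff_eq_zero.mpr fun k hk => by
    by_contra h; have := hQ k h; omega
  refine ⟨coeff 0 (Q.coeff 2), Q.coeff 1, Q.coeff 0, hcoeff 1, hcoeff 0, ?_⟩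
  rw [← rename_C Fin.succ, ← totalDegree_eq_zero_iff_eq_C.mp (Nat.le_zero.mp (hcoeff 2))]
  apply (finSuccEquiv R n).injective
  simp only [map_add, map_mul, map_pow, finSuccEquiv_rename_succ, finSuccEquiv_X_zero]
  conv_lhs => rw [hQq, Q.as_sum_range' 3 (by omega)]
  simp only [Finset.sum_range_succ, Finset.range_one, Finset.sum_singleton,
    ← Polynomial.C_mul_X_pow_eq_monomial, pow_zero, pow_one, mul_one]
  ring

theorem totalDegree_sub_C_mul_sq_le {R σ : Type*} [CommRing R] {b c : MvPolynomial σ R} (k : R)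
    (hb : b.totalDegree ≤ 1) (hc : c.totalDegree ≤ 2) : (c - C k * b ^ 2).totalDegree ≤ 2 := by
  refine (totalDegree_sub _ _).trans (max_le hc ((totalDegree_mul _ _).trans ?_))
  have := totalDegree_pow b 2
  rw [totalDegree_C]; omega

theorem isSumSq_quadratic_in_X_zero_of_nonneg {n : ℕ} {a : ℝ} {b c : MvPolynomial (Fin n) ℝ}
    (hp : ∀ x, 0 ≤ eval x (C a * X 0 ^ 2 + rename Fin.succ b * X 0 + rename Fin.succ c))
    (hr : (∀ y, 0 ≤ eval y (c - C (4 * a)⁻¹ * b ^ 2)) → IsSumSq (c - C (4 * a)⁻¹ * b ^ 2)) :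
    IsSumSq (C a * X 0 ^ 2 + rename Fin.succ b * X 0 + rename Fin.succ c) := by
  have hquad (y : Fin n → ℝ) (s : ℝ) : 0 ≤ a * s ^ 2 + eval y b * s + eval y c := by
    simpa [eval_rename] using hp (Fin.cons s y)
  have ha : 0 ≤ a := nonneg_of_forall_quadratic_nonneg (hquad 0)
  have hb (ha0 : a = 0) : rename Fin.succ b = 0 := by
    have hb0 : b = 0 := MvPolynomial.funext fun y => by
      simpa using eq_zero_of_forall_linear_nonneg (c := eval y c) fun s => by
        simpa [ha0] using hquad y s
    rw [hb0, map_zero]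
  have hsplit := algebraMap_mul_sq_add_mul_add_eq hb (X 0) (rename Fin.succ c)
  rw [algebraMap_eq, show rename Fin.succ c - C (4 * a)⁻¹ * rename Fin.succ b ^ 2 =
    rename Fin.succ (c - C (4 * a)⁻¹ * b ^ 2) by simp] at hsplit
  rw [hsplit] at hp ⊢
  refine .add ?_ ((hr fun y => ?_).map (rename Fin.succ))
  · set g := X 0 + C (2 * a)⁻¹ * rename Fin.succ b
    have hsq : C a * g ^ 2 = (C √a * g) * (C √a * g) := by
      rw [mul_mul_mul_comm, ← C_mul, Real.mul_self_sqrt ha, sq]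
    exact hsq ▸ IsSumSq.mul_self _
  · simpa [eval_rename] using hp (Fin.cons (-(2 * a)⁻¹ * eval y b) y)

theorem isSumSq_aeval_X_last_add_of_nonneg {n : ℕ} (u : Polynomial ℝ)
    {q : MvPolynomial (Fin (n + 1)) ℝ} (hq : q.totalDegree ≤ 2)
    (hp : ∀ x, 0 ≤ eval x (Polynomial.aeval (X (Fin.last n)) u + q)) :
    IsSumSq (Polynomial.aeval (X (Fin.last n)) u + q) := by
  induction n with
  | zero => exact isSumSq_of_nonneg_of_unique (σ := Fin 1) hp
  | succ n ih =>
    obtain ⟨a, b, c, hb, hc, rfl⟩ := exists_eq_quadratic_in_X_zero hq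
    have hsplit : Polynomial.aeval (X (Fin.last (n + 1))) u +
        (C a * X 0 ^ 2 + rename Fin.succ b * X 0 + rename Fin.succ c) =
        C a * X 0 ^ 2 + rename Fin.succ b * X 0 +
          rename Fin.succ (Polynomial.aeval (X (Fin.last n)) u + c) := by
      rw [map_add, rename_polynomial_aeval_X, Fin.succ_last]; ring
    rw [hsplit] at hp ⊢
    refine isSumSq_quadratic_in_X_zero_of_nonneg hp fun hr => ?_
    rw [add_sub_assoc] at hr ⊢
    exact ih (totalDegree_sub_C_mul_sq_le _ hb hc) hr

theorem isSumSq_aeval_X_add_of_nonneg {n : ℕ} (i : Fin n) (u : Polynomial ℝ)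
    {q : MvPolynomial (Fin n) ℝ} (hq : q.totalDegree ≤ 2)
    (hp : ∀ x, 0 ≤ eval x (Polynomial.aeval (X i) u + q)) :
    IsSumSq (Polynomial.aeval (X i) u + q) := by
  cases n with
  | zero => exact i.elim0
  | succ m =>
    let τ := Equiv.swap i (Fin.last m)
    have he : rename τ (Polynomial.aeval (X i) u + q) =
        Polynomial.aeval (X (Fin.last m)) u + rename τ q := by
      simp [τ]
    have hnn (x : Fin (m + 1) → ℝ) :
        0 ≤ eval x (Polynomial.aeval (X (Fin.last m)) u + rename τ q) := by
      rw [← he, eval_rename]; exact hp _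
    have h := (isSumSq_aeval_X_last_add_of_nonneg u ((totalDegree_rename_le _ _).trans hq)
      hnn).map (rename τ)
    have hττ : ⇑τ ∘ ⇑τ = id := _root_.funext fun j => Equiv.swap_apply_self _ _ j
    rwa [← he, rename_rename, hττ, rename_id_apply] at h

end MvPolynomial

theorem univariate_plus_quadratic_nonneg_iff_sos {n : ℕ}
    (p : MvPolynomial (Fin n) ℝ) (i : Fin n) (u : Polynomial ℝ)
    (q : MvPolynomial (Fin n) ℝ) (hq : q.totalDegree ≤ 2)
    (hp : p = Polynomial.aeval (MvPolynomial.X i) u + q) :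
    (∀ x : Fin n → ℝ, 0 ≤ eval x p) ↔ IsSOS p := by
  rw [isSOS_iff_isSumSq]
  refine ⟨fun hnn => hp ▸ isSumSq_aeval_X_add_of_nonneg i u hq (hp ▸ hnn),
    fun hsos x => (hsos.map (eval x)).nonneg⟩
end

section
/- The bivariate quartic polynomial p(x_1, x_2) = x_1⁴ − x_1² + 2x_1 + x_2⁴ − x_2² − 2x_2 + 12/5 − 2x_1x_2 is a sum of squares of polynomials, but p cannot be written as p = s + q where s is a separable polynomial with s(x) ≥ 0 for all x ∈ ℝ² and q is a polynomial of degree at most 2 with q(x) ≥ 0 for all x ∈ ℝ². -/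
open MvPolynomial

/-- The bivariate quartic polynomial
`x₁⁴ − x₁² + 2x₁ + x₂⁴ − x₂² − 2x₂ + 12/5 − 2x₁x₂`. -/
noncomputable def p3 : MvPolynomial (Fin 2) ℝ :=
  X 0 ^ 4 - X 0 ^ 2 + 2 * X 0 + X 1 ^ 4 - X 1 ^ 2 - 2 * X 1 + C (12 / 5) - 2 * X 0 * X 1

/-!
The sum-of-squares representation comes from an `LDLᵀ` factorisation of a Gram matrix of `p3`
in the monomial basis `1, x₁, x₂, x₁², x₁x₂, x₂²`.

The decomposition `p3 = s + q` is ruled out by a linear functional `L` built from point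
evaluations. The mixed second difference `δ₀₀ + δ₁₁ − δ₀₁ − δ₁₀` vanishes on separable
polynomials, so `L = 6(δ₀₀ + δ₁₁ − δ₀₁ − δ₁₀) + 3δ₋₁,₁ + δ₁,₋₁` is nonnegative on nonnegative
separable polynomials. On polynomials of degree at most 2, `L` agrees with the positive
combination `(12δ₋₅/₂,₋₃/₂ + 16δ₋₅/₄,₋₁/₄ + 72δ₀,₁)/25`, so it is nonnegative on nonnegative
quadratics as well. But `L p3 = −12/5`.
-/

theorem IsSOS.of_eq_sum_C_mul_sq {σ : Type*} {m : ℕ} {p : MvPolynomial σ ℝ} (c : Fin m → ℝ)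
    (hc : ∀ j, 0 ≤ c j) (q : Fin m → MvPolynomial σ ℝ) (hp : p = ∑ j, C (c j) * q j ^ 2) :
    IsSOS p := by
  refine ⟨m, fun j => C (Real.sqrt (c j)) * q j, ?_⟩
  simp only [hp, mul_pow, ← map_pow, Real.sq_sqrt (hc _)]

theorem MvPolynomial.linearMap_eq_of_totalDegree_le {σ R M : Type*} [CommSemiring R]
    [AddCommMonoid M] [Module R M] {φ ψ : MvPolynomial σ R →ₗ[R] M} {n : ℕ}
    (h : ∀ v : σ →₀ ℕ, (v.sum fun _ e => e) ≤ n → φ (monomial v 1) = ψ (monomial v 1))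
    {p : MvPolynomial σ R} (hp : p.totalDegree ≤ n) : φ p = ψ p := by
  rw [p.as_sum, map_sum, map_sum]
  refine Finset.sum_congr rfl fun v hv => ?_
  rw [← mul_one (coeff v p), ← smul_eq_mul, ← smul_monomial, map_smul, map_smul,
    h v ((le_totalDegree hv).trans hp)]

theorem MvPolynomial.eval_aeval_X {σ R : Type*} [CommSemiring R] (x : σ → R) (i : σ)
    (P : Polynomial R) : eval x (Polynomial.aeval (X i) P) = P.eval (x i) :=
  eval_toMvPolynomial x i P

namespace SeparablePlusQuadratic

noncomputable def gramFactor : Fin 6 → MvPolynomial (Fin 2) ℝ :=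
  ![1 + C (5/12) * X 0 - C (5/12) * X 1 - C (17/48) * X 0 ^ 2 - C (3/16) * (X 0 * X 1)
      - C (17/48) * X 1 ^ 2,
    X 0 - C (8/17) * X 1 + C (5/4) * X 0 ^ 2 - C (55/68) * (X 0 * X 1) - C (15/68) * X 1 ^ 2,
    X 1 + C (187/180) * X 0 ^ 2 + C (11/20) * (X 0 * X 1) - C (313/180) * X 1 ^ 2,
    X 0 ^ 2 + C (9/157) * (X 0 * X 1) - C (67/157) * X 1 ^ 2,
    X 0 * X 1 + C (7/142) * X 1 ^ 2,
    X 1 ^ 2]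

noncomputable def gramPivot : Fin 6 → ℝ :=
  ![12/5, 17/60, 15/68, 157/8640, 71/2355, 21/1420]

theorem p3_eq_sum_gramPivot_mul_sq :
    p3 = ∑ j, C (gramPivot j) * gramFactor j ^ 2 := by
  refine MvPolynomial.funext fun x => ?_
  simp only [Fin.sum_univ_succ, Fin.sum_univ_zero, add_zero, Matrix.cons_val_zero,
    Matrix.cons_val_succ, gramFactor, gramPivot, p3, map_add, map_sub, map_mul, map_pow,
    map_one, map_ofNat, eval_C, eval_X]
  ring

theorem isSOS_p3 : IsSOS p3 :=
  IsSOS.of_eq_sum_C_mul_sq gramPivot (by norm_num [Fin.forall_fin_succ, gramPivot]) _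
    p3_eq_sum_gramPivot_mul_sq

local notation "ev" x:max => AlgHom.toLinearMap (aeval x)

noncomputable def separatingFunctional : MvPolynomial (Fin 2) ℝ →ₗ[ℝ] ℝ :=
  (6 : ℝ) • (ev ![0, 0] + ev ![1, 1] - ev ![0, 1] - ev ![1, 0]) + (3 : ℝ) • ev ![-1, 1]
    + ev ![1, -1]

theorem separatingFunctional_apply (p : MvPolynomial (Fin 2) ℝ) :
    separatingFunctional p = 6 * (eval ![0, 0] p + eval ![1, 1] p - eval ![0, 1] p
      - eval ![1, 0] p) + 3 * eval ![-1, 1] p + eval ![1, -1] p := by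
  simp [separatingFunctional]

theorem separatingFunctional_p3 : separatingFunctional p3 = -12 / 5 := by
  norm_num [separatingFunctional_apply, p3]

theorem separatingFunctional_separable (s : Fin 2 → Polynomial ℝ) :
    separatingFunctional (∑ i, Polynomial.aeval (X i) (s i))
      = 3 * eval ![-1, 1] (∑ i, Polynomial.aeval (X i) (s i))
        + eval ![1, -1] (∑ i, Polynomial.aeval (X i) (s i)) := by
  simp only [separatingFunctional_apply, map_add, eval_aeval_X, Fin.sum_univ_two,
    Matrix.cons_val_zero, Matrix.cons_val_one]
  ring

theorem separatingFunctional_eq_of_totalDegree_le_two {q : MvPolynomial (Fin 2) ℝ}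
    (hq : q.totalDegree ≤ 2) :
    separatingFunctional q = (12 * eval ![-5/2, -3/2] q + 16 * eval ![-5/4, -1/4] q
      + 72 * eval ![0, 1] q) / 25 := by
  let ψ : MvPolynomial (Fin 2) ℝ →ₗ[ℝ] ℝ :=
    (12 / 25 : ℝ) • ev ![-5/2, -3/2] + (16 / 25 : ℝ) • ev ![-5/4, -1/4]
      + (72 / 25 : ℝ) • ev ![0, 1]
  have hψ : ∀ p, ψ p = (12 * eval ![-5/2, -3/2] p + 16 * eval ![-5/4, -1/4] p
      + 72 * eval ![0, 1] p) / 25 := fun p => by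
    simp only [ψ, LinearMap.add_apply, LinearMap.smul_apply, AlgHom.toLinearMap_apply,
      aeval_eq_eval, smul_eq_mul]
    ring
  rw [← hψ]
  refine linearMap_eq_of_totalDegree_le (fun v hv => ?_) hq
  rw [Finsupp.sum_fintype _ _ (fun _ => rfl), Fin.sum_univ_two] at hv
  have hmon : ∀ x : Fin 2 → ℝ, eval x (monomial v 1) = x 0 ^ v 0 * x 1 ^ v 1 := fun x => by
    rw [eval_monomial, Finsupp.prod_fintype _ _ (fun _ => pow_zero _), Fin.prod_univ_two, one_mul]
  simp only [separatingFunctional_apply, hψ, hmon, Matrix.cons_val_zero, Matrix.cons_val_one]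
  have h0 : v 0 ≤ 2 := by omega
  have h1 : v 1 ≤ 2 := by omega
  interval_cases v 0 <;> interval_cases v 1 <;> first | omega | norm_num

end SeparablePlusQuadratic

open SeparablePlusQuadratic

theorem sos_but_not_nonneg_sep_plus_nonneg_quad :
    IsSOS p3 ∧
    ¬ ∃ (s : Fin 2 → Polynomial ℝ) (q : MvPolynomial (Fin 2) ℝ),
        q.totalDegree ≤ 2 ∧
        (∀ x : Fin 2 → ℝ, 0 ≤ eval x (∑ i, Polynomial.aeval (MvPolynomial.X i) (s i))) ∧
        (∀ x : Fin 2 → ℝ, 0 ≤ eval x q) ∧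
        p3 = (∑ i, Polynomial.aeval (MvPolynomial.X i) (s i)) + q := by
  refine ⟨isSOS_p3, ?_⟩
  rintro ⟨s, q, hdeg, hs, hq, hp⟩
  have h := congrArg separatingFunctional hp
  rw [map_add, separatingFunctional_p3, separatingFunctional_separable,
    separatingFunctional_eq_of_totalDegree_le_two hdeg] at h
  linarith [hs ![-1, 1], hs ![1, -1], hq ![-5/2, -3/2], hq ![-5/4, -1/4], hq ![0, 1]]
end
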